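/- arXiv:2308.03761 — 2 statements merged into one kernel-verified Lean document; each statement's English description precedes it below -/
import Mathlib

section
/- Let R > 1 be a real number, let (n_ν)_{ν≥1} be a strictly increasing sequence of positive integers, and let (a_ν)_{ν≥1} be complex numbers with |a_ν| > Rⁿᵛ/2 (that is, |a_ν| > R^{n_ν}/2) for every ν ≥ 1. For each integer λ ≥ 1 let F_λ be the power series whose coefficient of z^{n_ν} equals a_ν when 2^λ divides ν, and all of whose other coefficients are zero. Then for all integers m ≥ 1 and μ ≥ 0 and all complex numbers c_m, c_{m+1}, …, c_{m+μ} with c_m ≠ 0, the power series Σ_{λ=m}^{m+μ} c_λ · F_λ has radius of convergence at most 1/R. In particular, since 1/R < 1, the classes of the F_λ (λ ≥ 1) are linearly independent modulo the space of power series with radius of convergence at least 1. -/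
/-!
Along the indices `ν = 2 ^ m * (2 * j + 1)` only `F m` among `F m, …, F (m + μ)` has a nonzero
coefficient at `z ^ (n ν)`, so the combination has coefficient `c m * a ν` there, of norm at least
`‖c m‖ / 2 * R ^ (n ν)`. Infinitely many coefficients of size `≳ R ^ k` force the radius down to
`1 / R < 1`; for a nonzero finitely supported `c`, apply this with `m` the least index in its support.
-/

open FormalMultilinearSeries Filter

namespace FormalMultilinearSeries

variable {𝕜 E F : Type*} [NontriviallyNormedField 𝕜] [NormedAddCommGroup E] [NormedSpace 𝕜 E]
  [NormedAddCommGroup F] [NormedSpace 𝕜 F]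

theorem radius_le_of_frequently_le_norm (p : FormalMultilinearSeries 𝕜 E F) {C R : ℝ}
    (hC : 0 < C) (hR : 0 < R) (h : ∃ᶠ k in atTop, C * R ^ k ≤ ‖p k‖) :
    p.radius ≤ ENNReal.ofReal (1 / R) := by
  by_contra! hlt
  obtain ⟨r, hRr, hrp⟩ := ENNReal.lt_iff_exists_nnreal_btwn.mp hlt
  have hRr : 1 < R * r := by
    rw [← ENNReal.ofReal_coe_nnreal, ENNReal.ofReal_lt_ofReal_iff_of_nonneg (by positivity)] at hRr
    rwa [div_lt_iff₀ hR, mul_comm] at hRr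
  have hsmall : ∀ᶠ k in atTop, ‖p k‖ * (r : ℝ) ^ k < C :=
    ((Asymptotics.isLittleO_one_iff ℝ).mp (p.isLittleO_one_of_lt_radius hrp)).eventually
      (gt_mem_nhds hC)
  obtain ⟨k, hk, hk'⟩ := (h.and_eventually hsmall).exists
  have : C ≤ ‖p k‖ * (r : ℝ) ^ k :=
    calc C ≤ C * (R * r) ^ k := le_mul_of_one_le_right hC.le (one_le_pow₀ hRr.le)
      _ = C * R ^ k * (r : ℝ) ^ k := by rw [mul_pow, mul_assoc]
      _ ≤ ‖p k‖ * (r : ℝ) ^ k := by gcongr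
  exact hk'.not_ge this

end FormalMultilinearSeries

theorem Nat.not_two_pow_dvd_two_pow_mul_odd {m l : ℕ} (hml : m < l) (j : ℕ) :
    ¬ 2 ^ l ∣ 2 ^ m * (2 * j + 1) := by
  intro h
  have h2 : 2 ^ m * 2 ∣ 2 ^ m * (2 * j + 1) := (pow_succ 2 m ▸ pow_dvd_pow 2 hml).trans h
  have := (Nat.mul_dvd_mul_iff_left (by positivity)).mp h2
  omega

section Lacunary

variable {n : ℕ → ℕ}

theorem coeff_eq_zero_of_not_two_pow_dvd {α : Type*} [Zero α] {F : ℕ → ℕ → α}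
    (hn : StrictMonoOn n (Set.Ici 1))
    (hF0 : ∀ l k, 1 ≤ l → (¬ ∃ ν, 1 ≤ ν ∧ 2 ^ l ∣ ν ∧ n ν = k) → F l k = 0)
    {l ν : ℕ} (hl : 1 ≤ l) (hν : 1 ≤ ν) (hdvd : ¬ 2 ^ l ∣ ν) : F l (n ν) = 0 :=
  hF0 l _ hl fun ⟨_, hν', hdvd', heq⟩ => hdvd (hn.injOn hν' hν heq ▸ hdvd')

theorem sum_Icc_mul_coeff_two_pow_mul_odd {S : Type*} [Semiring S] {a : ℕ → S}
    {F : ℕ → ℕ → S} (hn : StrictMonoOn n (Set.Ici 1))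
    (hF1 : ∀ l ν, 1 ≤ l → 1 ≤ ν → 2 ^ l ∣ ν → F l (n ν) = a ν)
    (hF0 : ∀ l k, 1 ≤ l → (¬ ∃ ν, 1 ≤ ν ∧ 2 ^ l ∣ ν ∧ n ν = k) → F l k = 0)
    {m : ℕ} (hm : 1 ≤ m) (μ j : ℕ) (c : ℕ → S) :
    ∑ l ∈ Finset.Icc m (m + μ), c l * F l (n (2 ^ m * (2 * j + 1))) =
      c m * a (2 ^ m * (2 * j + 1)) := by
  have hν : 1 ≤ 2 ^ m * (2 * j + 1) := Nat.one_le_iff_ne_zero.mpr (by positivity)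
  rw [Finset.sum_eq_single_of_mem m (by simp), hF1 m _ hm hν (dvd_mul_right _ _)]
  intro l hl hlm
  have hml : m < l := lt_of_le_of_ne (Finset.mem_Icc.mp hl).1 (Ne.symm hlm)
  rw [coeff_eq_zero_of_not_two_pow_dvd hn hF0 (hm.trans hml.le) hν
    (Nat.not_two_pow_dvd_two_pow_mul_odd hml j), mul_zero]

theorem radius_ofScalars_sum_Icc_le {𝕜 : Type*} [NontriviallyNormedField 𝕜] {R : ℝ} (hR : 1 < R)
    {a : ℕ → 𝕜} {F : ℕ → ℕ → 𝕜} (hn : StrictMonoOn n (Set.Ici 1))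
    (ha : ∀ ν, 1 ≤ ν → R ^ (n ν) / 2 < ‖a ν‖)
    (hF1 : ∀ l ν, 1 ≤ l → 1 ≤ ν → 2 ^ l ∣ ν → F l (n ν) = a ν)
    (hF0 : ∀ l k, 1 ≤ l → (¬ ∃ ν, 1 ≤ ν ∧ 2 ^ l ∣ ν ∧ n ν = k) → F l k = 0)
    {m : ℕ} (hm : 1 ≤ m) (μ : ℕ) {c : ℕ → 𝕜} (hcm : c m ≠ 0) :
    (ofScalars 𝕜 (fun k => ∑ l ∈ Finset.Icc m (m + μ), c l * F l k)).radius
      ≤ ENNReal.ofReal (1 / R) := by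
  set ν : ℕ → ℕ := fun j => 2 ^ m * (2 * j + 1)
  have hν : ∀ j, ν j ∈ Set.Ici 1 := fun j => Nat.one_le_iff_ne_zero.mpr (by positivity)
  have hνmono : StrictMono ν := fun i j hij => by simp only [ν]; gcongr
  have hk : Tendsto (fun j => n (ν j)) atTop atTop :=
    StrictMono.tendsto_atTop fun i j hij => hn (hν i) (hν j) (hνmono hij)
  refine radius_le_of_frequently_le_norm _ (C := ‖c m‖ / 2) (by positivity) (by positivity)
    (hk.frequently (Frequently.of_forall fun j => ?_))
  rw [ofScalars_norm, sum_Icc_mul_coeff_two_pow_mul_odd hn hF1 hF0 hm μ j c, norm_mul]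
  calc ‖c m‖ / 2 * R ^ n (ν j) = ‖c m‖ * (R ^ n (ν j) / 2) := by ring
    _ ≤ ‖c m‖ * ‖a (ν j)‖ := by gcongr; exact (ha _ (hν j)).le

end Lacunary

theorem stmt_4_general
    (R : ℝ) (hR : 1 < R)
    (n : ℕ → ℕ)
    (hnmono : ∀ ν μ, 1 ≤ ν → ν < μ → n ν < n μ)
    (a : ℕ → ℂ)
    (ha : ∀ ν, 1 ≤ ν → R ^ (n ν) / 2 < ‖a ν‖)
    (F : ℕ → ℕ → ℂ)
    (hF1 : ∀ l ν, 1 ≤ l → 1 ≤ ν → 2 ^ l ∣ ν → F l (n ν) = a ν)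
    (hF0 : ∀ l k, 1 ≤ l → (¬ ∃ ν, 1 ≤ ν ∧ 2 ^ l ∣ ν ∧ n ν = k) → F l k = 0) :
    (∀ m μ : ℕ, 1 ≤ m → ∀ c : ℕ → ℂ, c m ≠ 0 →
      (ofScalars ℂ (fun k => ∑ l ∈ Finset.Icc m (m + μ), c l * F l k)).radius
        ≤ ENNReal.ofReal (1 / R)) ∧
    (∀ c : ℕ →₀ ℂ, (∀ l ∈ c.support, 1 ≤ l) →
      (1 : ENNReal) ≤ (ofScalars ℂ (fun k => ∑ l ∈ c.support, c l * F l k)).radius →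
      c = 0) := by
  have hn : StrictMonoOn n (Set.Ici 1) := fun ν hν μ _ h => hnmono ν μ hν h
  refine ⟨fun m μ hm c hcm => radius_ofScalars_sum_Icc_le hR hn ha hF1 hF0 hm μ hcm,
    fun c hc hrad => ?_⟩
  by_contra hc0
  have hsupp : c.support.Nonempty := Finsupp.support_nonempty_iff.mpr hc0
  set m := c.support.min' hsupp
  have hm : m ∈ c.support := c.support.min'_mem hsupp
  have hsub : c.support ⊆ Finset.Icc m (m + (c.support.max' hsupp - m)) := fun l hl =>
    Finset.mem_Icc.mpr ⟨c.support.min'_le l hl, by have := c.support.le_max' l hl; omega⟩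
  have hsum : (fun k => ∑ l ∈ c.support, c l * F l k) =
      fun k => ∑ l ∈ Finset.Icc m (m + (c.support.max' hsupp - m)), c l * F l k :=
    funext fun k => Finset.sum_subset hsub fun l _ hl => by
      rw [Finsupp.notMem_support_iff.mp hl, zero_mul]
  have hlt : ENNReal.ofReal (1 / R) < 1 :=
    ENNReal.ofReal_lt_one.mpr ((div_lt_one (by linarith)).mpr hR)
  rw [hsum] at hrad
  exact (hrad.trans (radius_ofScalars_sum_Icc_le hR hn ha hF1 hF0 (hc m hm) _
    (Finsupp.mem_support_iff.mp hm))).not_gt hlt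

/-- Let `R > 1`, `(n ν)_{ν ≥ 1}` a strictly increasing sequence of positive integers and
`(a ν)_{ν ≥ 1}` complex numbers with `‖a ν‖ > Rⁿᵛ / 2`.  For `l ≥ 1`, let `F l` be the
coefficient sequence of the power series whose coefficient of `z ^ (n ν)` is `a ν` when
`2 ^ l ∣ ν` and all of whose other coefficients vanish.  Then every linear combination
`Σ_{l = m}^{m + μ} c l • F l` with `m ≥ 1` and `c m ≠ 0` has radius of convergence at
most `1 / R`; in particular the classes of the `F l` (`l ≥ 1`) are linearly independent
modulo the power series with radius of convergence at least `1`. -/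
theorem stmt_4
    (R : ℝ) (hR : 1 < R)
    (n : ℕ → ℕ)
    (hnpos : ∀ ν, 1 ≤ ν → 0 < n ν)
    (hnmono : ∀ ν μ, 1 ≤ ν → ν < μ → n ν < n μ)
    (a : ℕ → ℂ)
    (ha : ∀ ν, 1 ≤ ν → R ^ (n ν) / 2 < ‖a ν‖)
    (F : ℕ → ℕ → ℂ)
    (hF1 : ∀ l ν, 1 ≤ l → 1 ≤ ν → 2 ^ l ∣ ν → F l (n ν) = a ν)
    (hF0 : ∀ l k, 1 ≤ l → (¬ ∃ ν, 1 ≤ ν ∧ 2 ^ l ∣ ν ∧ n ν = k) → F l k = 0) :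
    (∀ m μ : ℕ, 1 ≤ m → ∀ c : ℕ → ℂ, c m ≠ 0 →
      (ofScalars ℂ (fun k => ∑ l ∈ Finset.Icc m (m + μ), c l * F l k)).radius
        ≤ ENNReal.ofReal (1 / R)) ∧
    (∀ c : ℕ →₀ ℂ, (∀ l ∈ c.support, 1 ≤ l) →
      (1 : ENNReal) ≤ (ofScalars ℂ (fun k => ∑ l ∈ c.support, c l * F l k)).radius →
      c = 0) :=
  stmt_4_general R hR n hnmono a ha F hF1 hF0
end

section
/- Let τ be a complex number with Im τ > 0, and let p, q be real numbers such that there is no positive integer n with both np ∈ ℤ and nq ∈ ℤ. Let F : ℂ × ℂ → ℂ be an entire (everywhere complex-differentiable) function satisfying, for all (z, w) ∈ ℂ × ℂ: F(z, w + 1) = F(z, w), F(z + 1, w + p) = F(z, w), and F(z + τ, w + q) = F(z, w). Then F is constant. -/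
/-!
For fixed `z` the function `w ↦ F (z, w)` is `1`-periodic; let `c n z` be the `n`-th Fourier
coefficient of its restriction to `ℝ`. Each `c n` is entire, and the other two periodicities give
`c n (z + 1) = e(-n p) c n z` and `c n (z + τ) = e(-n q) c n z`, where `e(t) = exp (2πit)`.
So `|c n|` is periodic for the lattice `ℤ + ℤτ`, hence bounded, and `c n` is constant by
Liouville; a nonzero constant forces `e(-n p) = e(-n q) = 1`, i.e. `n p, n q ∈ ℤ`, which the
hypothesis excludes for `n ≠ 0`. Thus `x ↦ F (z, x)` has only a constant Fourier coefficient, so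
`F (z, x) = c 0 z = c 0 0` on `ℂ × ℝ`, and the identity theorem in `w` extends this to `ℂ × ℂ`.
-/

open Complex Metric Filter Function Set AddCircle
open scoped Interval Topology

theorem differentiable_intervalIntegral_of_continuous {E : Type*} [NormedAddCommGroup E]
    [NormedSpace ℂ E] [CompleteSpace E] {G : ℝ → ℂ → E}
    (hG : Continuous G.uncurry) (hGd : ∀ x, Differentiable ℂ (G x)) (a b : ℝ) :
    Differentiable ℂ fun z => ∫ x in a..b, G x z := by
  intro z₀
  obtain ⟨B, hB⟩ : ∃ B, ∀ p ∈ [[a, b]] ×ˢ closedBall z₀ 2, ‖G.uncurry p‖ ≤ B :=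
    (isCompact_uIcc.prod (isCompact_closedBall z₀ 2)).exists_bound_of_continuousOn
      hG.continuousOn
  -- Cauchy estimate on the unit circle around `z`, which lies in `closedBall z₀ 2`.
  have hderiv_le : ∀ x ∈ [[a, b]], ∀ z ∈ ball z₀ 1, ‖deriv (G x) z‖ ≤ B := by
    intro x hx z hz
    refine div_one B ▸ norm_deriv_le_of_forall_mem_sphere_norm_le one_pos (hGd x).diffContOnCl
      fun u hu => hB (x, u) ⟨hx, ?_⟩
    rw [mem_closedBall]
    linarith [dist_triangle u z z₀, mem_sphere.1 hu, mem_ball.1 hz]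
  have hslice : ∀ z, Continuous fun x => G x z := fun z =>
    hG.comp (continuous_id.prodMk continuous_const)
  exact (intervalIntegral.hasDerivAt_integral_of_dominated_loc_of_deriv_le
    (μ := MeasureTheory.volume) (F' := fun z x => deriv (G x) z) (bound := fun _ => B)
    (ball_mem_nhds z₀ one_pos)
    (Eventually.of_forall fun z => (hslice z).aestronglyMeasurable)
    ((hslice z₀).intervalIntegrable a b)
    ((stronglyMeasurable_deriv_with_param hG).comp_measurable
      (measurable_id.prodMk measurable_const)).aestronglyMeasurable
    (MeasureTheory.ae_of_all _ fun x hx z hz => hderiv_le x (uIoc_subset_uIcc hx) z hz)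
    intervalIntegrable_const
    (MeasureTheory.ae_of_all _ fun x _ z _ => (hGd x z).hasDerivAt)).2.differentiableAt

theorem Differentiable.apply_eq_of_forall_ofReal {E : Type*} [NormedAddCommGroup E]
    [NormedSpace ℂ E] [CompleteSpace E] {f : ℂ → E} (hf : Differentiable ℂ f) {c : E}
    (h : ∀ x : ℝ, f x = c) (w : ℂ) : f w = c := by
  have hreal : Tendsto ((↑) : ℝ → ℂ) (𝓝[≠] 0) (𝓝[≠] 0) :=
    continuous_ofReal.continuousWithinAt.tendsto_nhdsWithin fun x hx => by simpa using hx
  have := AnalyticOnNhd.eq_of_frequently_eq (fun z _ => hf.analyticAt z) analyticOnNhd_const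
    (hreal.frequently (Frequently.of_forall h))
  exact congrFun this w

namespace PeriodPair

variable (L : PeriodPair) {E : Type*} [NormedAddCommGroup E]

theorem periodic_of_mem_lattice {α : Type*} {g : ℂ → α} (h₁ : Periodic g L.ω₁)
    (h₂ : Periodic g L.ω₂) {l : ℂ} (hl : l ∈ L.lattice) : Periodic g l := by
  obtain ⟨m, n, rfl⟩ := mem_lattice.1 hl
  exact (h₁.int_mul m).add_period (h₂.int_mul n)

theorem isBounded_range_of_periodic_norm {f : ℂ → E} (hf : Continuous f)
    (h₁ : Periodic (‖f ·‖) L.ω₁) (h₂ : Periodic (‖f ·‖) L.ω₂) :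
    Bornology.IsBounded (range f) := by
  obtain ⟨C, hC⟩ := (ZSpan.fundamentalDomain_isBounded L.basis).isCompact_closure
    |>.exists_bound_of_continuousOn hf.continuousOn
  refine isBounded_iff_forall_norm_le.2 ⟨C, ?_⟩
  rintro - ⟨z, rfl⟩
  have hfloor : (ZSpan.floor L.basis z : ℂ) ∈ L.lattice := by
    rw [L.lattice_eq_span_range_basis]
    exact (ZSpan.floor L.basis z).2
  calc ‖f z‖ = ‖f (ZSpan.fract L.basis z + ZSpan.floor L.basis z)‖ := by
        rw [ZSpan.fract_apply, sub_add_cancel]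
    _ = ‖f (ZSpan.fract L.basis z)‖ := L.periodic_of_mem_lattice h₁ h₂ hfloor _
    _ ≤ C := hC _ (subset_closure (ZSpan.fract_mem_fundamentalDomain _ _))

theorem apply_eq_apply_of_periodic_norm [NormedSpace ℂ E] {f : ℂ → E}
    (hf : Differentiable ℂ f) (h₁ : Periodic (‖f ·‖) L.ω₁) (h₂ : Periodic (‖f ·‖) L.ω₂)
    (z w : ℂ) : f z = f w :=
  hf.apply_eq_apply_of_bounded (L.isBounded_range_of_periodic_norm hf.continuous h₁ h₂) z w

end PeriodPair

theorem linearIndependent_one_of_im_ne_zero {τ : ℂ} (hτ : τ.im ≠ 0) :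
    LinearIndependent ℝ ![1, τ] := by
  refine LinearIndependent.pair_iff.2 fun s t h => ?_
  have ht : t = 0 := by simpa [hτ] using congrArg Complex.im h
  subst ht
  simpa using h

theorem fourier_apply_add {T : ℝ} (n : ℤ) (x y : AddCircle T) :
    fourier n (x + y) = fourier n x * fourier n y := by
  simp only [fourier_apply, smul_add, toCircle_add, Circle.coe_mul]

theorem fourier_coe_eq_one_iff {T : ℝ} (hT : T ≠ 0) (n : ℤ) (x : ℝ) :
    fourier n (x : AddCircle T) = 1 ↔ ∃ k : ℤ, (n : ℝ) * x = k * T := by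
  rw [fourier_apply, Circle.coe_eq_one, ← toCircle_zero (T := T), (injective_toCircle hT).eq_iff,
    ← QuotientAddGroup.mk_zsmul, coe_eq_zero_iff]
  simp [eq_comm]

theorem exists_natAbs_mul_eq_int {n k : ℤ} {x : ℝ} (h : (n : ℝ) * x = k) :
    ∃ a : ℤ, (n.natAbs : ℝ) * x = a :=
  ⟨n.sign * k, by
    rw [Int.cast_mul, ← h, ← mul_assoc, ← Int.cast_mul, Int.sign_mul_self_eq_natAbs,
      Int.cast_natCast]⟩

theorem exists_nat_mul_eq_int_of_fourier_eq_one {n : ℤ} (hn : n ≠ 0) {p q : ℝ}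
    (hp : fourier n (p : UnitAddCircle) = 1) (hq : fourier n (q : UnitAddCircle) = 1) :
    ∃ m : ℕ, 0 < m ∧ (∃ a : ℤ, (m : ℝ) * p = a) ∧ (∃ b : ℤ, (m : ℝ) * q = b) := by
  obtain ⟨k, hk⟩ := (fourier_coe_eq_one_iff one_ne_zero n p).1 hp
  obtain ⟨l, hl⟩ := (fourier_coe_eq_one_iff one_ne_zero n q).1 hq
  rw [mul_one] at hk hl
  exact ⟨n.natAbs, Int.natAbs_pos.2 hn, exists_natAbs_mul_eq_int hk, exists_natAbs_mul_eq_int hl⟩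

theorem Function.Periodic.intervalIntegral_fourier_mul_comp_sub {T : ℝ} {g : ℝ → ℂ}
    (hg : Periodic g T) (n : ℤ) (a : ℝ) :
    ∫ x in 0..T, fourier n (x : AddCircle T) * g (x - a) =
      fourier n (a : AddCircle T) * ∫ x in 0..T, fourier n (x : AddCircle T) * g x := by
  set h : ℝ → ℂ := fun x => fourier n (x : AddCircle T) * g x
  have hh : Periodic h T := fun x => by simp only [h, coe_add_period, hg x]
  calc ∫ x in 0..T, fourier n (x : AddCircle T) * g (x - a)
      = ∫ x in 0..T, fourier n (a : AddCircle T) * h (x - a) := by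
        refine intervalIntegral.integral_congr fun x _ => ?_
        rw [← mul_assoc, ← fourier_apply_add, ← QuotientAddGroup.mk_add, add_sub_cancel]
    _ = fourier n (a : AddCircle T) * ∫ x in 0..T, h x := by
        rw [intervalIntegral.integral_const_mul, intervalIntegral.integral_comp_sub_right,
          zero_sub, ← neg_add_eq_sub, hh.intervalIntegral_add_eq (-a) 0, zero_add]

theorem ContinuousMap.apply_eq_fourierCoeff_zero {T : ℝ} [Fact (0 < T)] (f : C(AddCircle T, ℂ))
    (h : ∀ n ≠ 0, fourierCoeff f n = 0) (x : AddCircle T) : f x = fourierCoeff f 0 := by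
  have hsum : HasSum (fun n => fourierCoeff f n • fourier n x) (fourierCoeff f 0) := by
    simpa using hasSum_single (f := fun n => fourierCoeff f n • fourier n x) 0
      fun n hn => by simp [h n hn]
  exact (has_pointwise_sum_fourier_series_of_summable (hasSum_single 0 h).summable x).unique hsum

theorem Function.Periodic.eq_of_intervalIntegral_fourier_mul_eq_zero {T : ℝ} [Fact (0 < T)]
    {g : ℝ → ℂ} (hg : Continuous g) (hper : Periodic g T)
    (h : ∀ n ≠ 0, ∫ x in 0..T, fourier (-n) (x : AddCircle T) * g x = 0) (x y : ℝ) :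
    g x = g y := by
  let G : C(AddCircle T, ℂ) :=
    ⟨hper.lift, (QuotientAddGroup.isQuotientMap_mk _).continuous_iff.2 hg⟩
  have hG : ∀ n ≠ 0, fourierCoeff G n = 0 := fun n hn => by
    rw [fourierCoeff_eq_intervalIntegral _ _ 0, zero_add]
    simp only [G, ContinuousMap.coe_mk, Periodic.lift_coe, smul_eq_mul, h n hn, smul_zero]
  exact (G.apply_eq_fourierCoeff_zero hG x).trans (G.apply_eq_fourierCoeff_zero hG y).symm

noncomputable def partialFourierCoeff (F : ℂ × ℂ → ℂ) (n : ℤ) (z : ℂ) : ℂ :=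
  ∫ x in (0 : ℝ)..1, fourier (-n) (x : UnitAddCircle) * F (z, x)

section PartialFourierCoeff

variable {F : ℂ × ℂ → ℂ}

theorem differentiable_partialFourierCoeff (hF : Differentiable ℂ F) (n : ℤ) :
    Differentiable ℂ (partialFourierCoeff F n) :=
  differentiable_intervalIntegral_of_continuous
    (G := fun x z => fourier (-n) (x : UnitAddCircle) * F (z, x))
    (((fourier (-n)).continuous.comp (continuous_quotient_mk'.comp continuous_fst)).mul
      (hF.continuous.comp (continuous_snd.prodMk (continuous_ofReal.comp continuous_fst))))
    (fun _ => (hF.comp (differentiable_id.prodMk (differentiable_const _))).const_mul _) 0 1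

theorem partialFourierCoeff_add (h1 : ∀ z w, F (z, w + 1) = F (z, w)) {a : ℂ} {r : ℝ}
    (h : ∀ z w, F (z + a, w + r) = F (z, w)) (n : ℤ) (z : ℂ) :
    partialFourierCoeff F n (z + a) =
      fourier (-n) (r : UnitAddCircle) * partialFourierCoeff F n z := by
  have hper : Periodic (fun x : ℝ => F (z, x)) 1 := fun x => by simpa using h1 z x
  rw [partialFourierCoeff, partialFourierCoeff, ← hper.intervalIntegral_fourier_mul_comp_sub]
  refine intervalIntegral.integral_congr fun x _ => ?_
  rw [← h z, ofReal_sub, sub_add_cancel]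

theorem partialFourierCoeff_eq_apply_zero (L : PeriodPair) (hF : Differentiable ℂ F)
    (h1 : ∀ z w, F (z, w + 1) = F (z, w)) {p q : ℝ}
    (hp : ∀ z w, F (z + L.ω₁, w + p) = F (z, w)) (hq : ∀ z w, F (z + L.ω₂, w + q) = F (z, w))
    (n : ℤ) (z : ℂ) : partialFourierCoeff F n z = partialFourierCoeff F n 0 := by
  refine L.apply_eq_apply_of_periodic_norm (differentiable_partialFourierCoeff hF n)
    (fun z => ?_) (fun z => ?_) z 0 <;>
  simp only [partialFourierCoeff_add h1 hp, partialFourierCoeff_add h1 hq, norm_mul,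
    fourier_apply, Circle.norm_coe, one_mul]

theorem fourier_eq_one_of_partialFourierCoeff_ne_zero (L : PeriodPair)
    (hF : Differentiable ℂ F) (h1 : ∀ z w, F (z, w + 1) = F (z, w)) {p q : ℝ}
    (hp : ∀ z w, F (z + L.ω₁, w + p) = F (z, w)) (hq : ∀ z w, F (z + L.ω₂, w + q) = F (z, w))
    {n : ℤ} {z : ℂ} (hn : partialFourierCoeff F n z ≠ 0) :
    fourier (-n) (p : UnitAddCircle) = 1 ∧ fourier (-n) (q : UnitAddCircle) = 1 := by
  have hc := partialFourierCoeff_eq_apply_zero L hF h1 hp hq n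
  have hn₀ : partialFourierCoeff F n 0 ≠ 0 := hc z ▸ hn
  have hp' := partialFourierCoeff_add h1 hp n 0
  have hq' := partialFourierCoeff_add h1 hq n 0
  rw [hc] at hp' hq'
  exact ⟨(mul_eq_right₀ hn₀).1 hp'.symm, (mul_eq_right₀ hn₀).1 hq'.symm⟩

theorem apply_ofReal_eq_partialFourierCoeff_zero (hF : Continuous F)
    (h1 : ∀ z w, F (z, w + 1) = F (z, w)) {z : ℂ}
    (h : ∀ n ≠ 0, partialFourierCoeff F n z = 0) (x : ℝ) :
    F (z, x) = partialFourierCoeff F 0 z := by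
  have hper : Periodic (fun x : ℝ => F (z, x)) 1 := fun x => by simpa using h1 z x
  have hslice (x : ℝ) : F (z, x) = F (z, 0) := by
    simpa using hper.eq_of_intervalIntegral_fourier_mul_eq_zero
      (hF.comp (continuous_const.prodMk continuous_ofReal)) h x 0
  simp [partialFourierCoeff, hslice]

end PartialFourierCoeff

/-- Let `τ` have positive imaginary part and let `p, q` be real numbers such that no
positive integer `n` satisfies both `np ∈ ℤ` and `nq ∈ ℤ`.  Every entire function
`F : ℂ × ℂ → ℂ` satisfying `F (z, w + 1) = F (z, w)`, `F (z + 1, w + p) = F (z, w)` and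
`F (z + τ, w + q) = F (z, w)` is constant. -/
theorem stmt_9
    (τ : ℂ) (hτ : 0 < τ.im) (p q : ℝ)
    (hpq : ¬ ∃ n : ℕ, 0 < n ∧ (∃ a : ℤ, (n : ℝ) * p = (a : ℝ)) ∧
      (∃ b : ℤ, (n : ℝ) * q = (b : ℝ)))
    (F : ℂ × ℂ → ℂ) (hF : Differentiable ℂ F)
    (h1 : ∀ z w : ℂ, F (z, w + 1) = F (z, w))
    (h2 : ∀ z w : ℂ, F (z + 1, w + (p : ℂ)) = F (z, w))
    (h3 : ∀ z w : ℂ, F (z + τ, w + (q : ℂ)) = F (z, w)) :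
    ∀ x y : ℂ × ℂ, F x = F y := by
  let L : PeriodPair := ⟨1, τ, linearIndependent_one_of_im_ne_zero hτ.ne'⟩
  have hvanish (z : ℂ) (n : ℤ) (hn : n ≠ 0) : partialFourierCoeff F n z = 0 := by
    by_contra hne
    obtain ⟨hp, hq⟩ := fourier_eq_one_of_partialFourierCoeff_ne_zero L hF h1 h2 h3 hne
    exact hpq (exists_nat_mul_eq_int_of_fourier_eq_one (neg_ne_zero.2 hn) hp hq)
  have hreal (z : ℂ) (x : ℝ) : F (z, x) = partialFourierCoeff F 0 0 := by
    rw [apply_ofReal_eq_partialFourierCoeff_zero hF.continuous h1 (hvanish z) x,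
      partialFourierCoeff_eq_apply_zero L hF h1 h2 h3]
  have hconst (v : ℂ × ℂ) : F v = partialFourierCoeff F 0 0 :=
    (hF.comp ((differentiable_const v.1).prodMk differentiable_id)).apply_eq_of_forall_ofReal
      (hreal v.1) v.2
  intro x y
  rw [hconst x, hconst y]
end
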